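/- The ZH-gadget satisfies a bialgebra law with the ZH-monoid: two copies of the gadget sharing a copied control, with corresponding outputs merged pairwise by the monoid, equal a single gadget applied after the monoid. Precisely, G * (I₂ ⊗ₖ M) = (M ⊗ₖ M) * (I₂ ⊗ₖ SWAP ⊗ₖ I₂) * (G ⊗ₖ G) * (I₂ ⊗ₖ SWAP ⊗ₖ I₂) * (Δ ⊗ₖ I₂ ⊗ₖ I₂), where the composites are compared after the canonical associativity reindexings of iterated products of Fin 2. -/

import Mathlib

open Kronecker Matrix

/-- The ZH-monoid `M`, determined on the standard basis by
`M|00⟩ = |0⟩`, `M|01⟩ = |1⟩`, `M|10⟩ = |1⟩`, `M|11⟩ = 0`. -/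
def ZHmonoid : Matrix (Fin 2) (Fin 2 × Fin 2) ℂ :=
  Matrix.of fun i p =>
    if p = (0, 0) then ![1, 0] i
    else if p = (1, 1) then 0
    else ![0, 1] i

/-- The ZH-gadget `G`, determined on the standard basis by
`G|00⟩ = |00⟩`, `G|01⟩ = |10⟩`, `G|10⟩ = |00⟩`, `G|11⟩ = |01⟩`. -/
def ZHgadget : Matrix (Fin 2 × Fin 2) (Fin 2 × Fin 2) ℂ :=
  Matrix.of fun q p =>
    if p.1 = 0 then (if q = (p.2, 0) then 1 else 0)
    else (if q = (0, p.2) then 1 else 0)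

/-- The copy map `Δ`, with `Δ|x⟩ = |xx⟩`. -/
def copyM : Matrix (Fin 2 × Fin 2) (Fin 2) ℂ :=
  Matrix.of fun q x => if q = (x, x) then 1 else 0

/-- The SWAP permutation matrix, with `SWAP|ab⟩ = |ba⟩`. -/
def SWAP : Matrix (Fin 2 × Fin 2) (Fin 2 × Fin 2) ℂ :=
  Matrix.of fun q p => if q = (p.2, p.1) then 1 else 0

/-- The canonical associativity reindexing
`(Fin 2 × (Fin 2 × Fin 2)) × Fin 2 ≃ (Fin 2 × Fin 2) × (Fin 2 × Fin 2)`. -/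
def assocE : (Fin 2 × (Fin 2 × Fin 2)) × Fin 2 ≃ (Fin 2 × Fin 2) × (Fin 2 × Fin 2) :=
  ((Equiv.prodAssoc (Fin 2) (Fin 2) (Fin 2)).symm.prodCongr (Equiv.refl (Fin 2))).trans
    (Equiv.prodAssoc (Fin 2 × Fin 2) (Fin 2) (Fin 2))

/-- The middle permutation `I₂ ⊗ₖ SWAP ⊗ₖ I₂`, reindexed to act on
`(Fin 2 × Fin 2) × (Fin 2 × Fin 2)`. -/
def midSwap : Matrix ((Fin 2 × Fin 2) × (Fin 2 × Fin 2)) ((Fin 2 × Fin 2) × (Fin 2 × Fin 2)) ℂ :=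
  Matrix.reindex assocE assocE
    (((1 : Matrix (Fin 2) (Fin 2) ℂ) ⊗ₖ SWAP) ⊗ₖ (1 : Matrix (Fin 2) (Fin 2) ℂ))

/-- The map `Δ ⊗ₖ I₂ ⊗ₖ I₂`, reindexed via the canonical associativity reindexings. -/
def copyII : Matrix ((Fin 2 × Fin 2) × (Fin 2 × Fin 2)) (Fin 2 × (Fin 2 × Fin 2)) ℂ :=
  Matrix.reindex (Equiv.prodAssoc (Fin 2 × Fin 2) (Fin 2) (Fin 2))
    (Equiv.prodAssoc (Fin 2) (Fin 2) (Fin 2))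
    ((copyM ⊗ₖ (1 : Matrix (Fin 2) (Fin 2) ℂ)) ⊗ₖ (1 : Matrix (Fin 2) (Fin 2) ℂ))

/-! Each of `M`, `G`, `Δ`, `SWAP` is the 0/1 matrix of a partial map of basis states (`M` is
addition mod 2, undefined at `|11⟩`). Such matrices multiply, tensor and reindex exactly as the
underlying partial maps compose, pair and relabel, so both sides are matrices of partial maps
`Fin 2 × Fin 2 × Fin 2 → Option (Fin 2 × Fin 2)`, and these agree on all eight basis states. -/

namespace Matrix

variable {α β γ α' β' R : Type*}

/-- Unlike `PEquiv.toMatrix`, `f` need not be injective, and inputs index columns. -/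
def ofOptionFun [DecidableEq β] [Zero R] [One R] (f : α → Option β) : Matrix β α R :=
  of fun b a => if f a = some b then 1 else 0

variable [DecidableEq β]

@[simp]
theorem ofOptionFun_some [DecidableEq α] [Zero R] [One R] :
    (ofOptionFun some : Matrix α α R) = 1 := by
  ext b a
  simp [ofOptionFun, one_apply, eq_comm]

theorem ofOptionFun_mul_ofOptionFun [Fintype β] [DecidableEq γ] [NonAssocSemiring R]
    (g : β → Option γ) (f : α → Option β) :
    (ofOptionFun g : Matrix γ β R) * (ofOptionFun f : Matrix β α R) =
      ofOptionFun fun a => (f a).bind g := by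
  refine Matrix.ext fun c a => ?_
  rw [mul_apply]
  cases h : f a <;> simp [ofOptionFun, h]

theorem ofOptionFun_kronecker [DecidableEq β'] [MulZeroOneClass R]
    (f : α → Option β) (f' : α' → Option β') :
    (ofOptionFun f ⊗ₖ ofOptionFun f' : Matrix (β × β') (α × α') R) =
      ofOptionFun fun a => Option.map₂ Prod.mk (f a.1) (f' a.2) := by
  ext ⟨b, b'⟩ ⟨a, a'⟩
  cases h : f a <;> cases h' : f' a' <;> simp [ofOptionFun, h, h', ← ite_and, and_comm]

theorem reindex_ofOptionFun [DecidableEq γ] [Zero R] [One R] (e : β ≃ γ) (e' : α ≃ α')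
    (f : α → Option β) :
    (reindex e e' (ofOptionFun f) : Matrix γ α' R) =
      ofOptionFun fun a => (f (e'.symm a)).map e := by
  ext c a
  cases h : f (e'.symm a) <;> simp [ofOptionFun, h, Equiv.eq_symm_apply]

end Matrix

open Matrix

theorem ZHmonoid_eq_ofOptionFun :
    ZHmonoid = ofOptionFun fun p => if p = (1, 1) then none else some (p.1 + p.2) := by
  ext i ⟨a, b⟩
  fin_cases i <;> fin_cases a <;> fin_cases b <;> simp [ZHmonoid, ofOptionFun]

theorem ZHgadget_eq_ofOptionFun :
    ZHgadget = ofOptionFun fun p => some (if p.1 = 0 then (p.2, 0) else (0, p.2)) := by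
  ext q ⟨a, b⟩
  fin_cases a <;> simp [ZHgadget, ofOptionFun, eq_comm]

theorem copyM_eq_ofOptionFun : copyM = ofOptionFun fun x => some (x, x) := by
  ext q x
  simp [copyM, ofOptionFun, eq_comm]

theorem SWAP_eq_ofOptionFun : SWAP = ofOptionFun fun p => some p.swap := by
  ext q p
  simp [SWAP, ofOptionFun, eq_comm, Prod.swap]

theorem midSwap_eq_ofOptionFun :
    midSwap = ofOptionFun fun p => some ((p.1.1, p.2.1), (p.1.2, p.2.2)) := by
  simp only [midSwap, SWAP_eq_ofOptionFun, ← ofOptionFun_some, ofOptionFun_kronecker,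
    reindex_ofOptionFun]
  rfl

theorem copyII_eq_ofOptionFun : copyII = ofOptionFun fun j => some ((j.1, j.1), j.2) := by
  simp only [copyII, copyM_eq_ofOptionFun, ← ofOptionFun_some, ofOptionFun_kronecker,
    reindex_ofOptionFun]
  rfl

/-- The ZH-gadget satisfies a bialgebra law with the ZH-monoid:
`G * (I₂ ⊗ₖ M) = (M ⊗ₖ M) * (I₂ ⊗ₖ SWAP ⊗ₖ I₂) * (G ⊗ₖ G) * (I₂ ⊗ₖ SWAP ⊗ₖ I₂) * (Δ ⊗ₖ I₂ ⊗ₖ I₂)`. -/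
theorem ZHgadget_monoid_bialgebra :
    ZHgadget * ((1 : Matrix (Fin 2) (Fin 2) ℂ) ⊗ₖ ZHmonoid) =
      (ZHmonoid ⊗ₖ ZHmonoid) * midSwap * (ZHgadget ⊗ₖ ZHgadget) * midSwap * copyII := by
  simp only [ZHgadget_eq_ofOptionFun, ZHmonoid_eq_ofOptionFun, midSwap_eq_ofOptionFun,
    copyII_eq_ofOptionFun, ← ofOptionFun_some, ofOptionFun_kronecker, ofOptionFun_mul_ofOptionFun]
  congr 1
  decide
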